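/- arXiv:1512.02614 — 4 statements merged into one kernel-verified Lean document; each statement's English description precedes it below -/
import Mathlib

section
/- For all real numbers x > 0, the Gamma function satisfies √(2e)·((x+1/2)/e)^(x+1/2) ≤ Γ(x+1) ≤ √(2π)·((x+1/2)/e)^(x+1/2). -/
/-!
Write `R x = log Γ(x+1) - (x+1/2) log (x+1/2) + (x+1/2)`, so that
`Γ(x+1) = exp (R x) ((x+1/2)/e)^(x+1/2)` and `R 0 = log √(2e)`. The decrement `R t - R (t+1)` is
an elementary function of `t`; by the logarithmic-mean inequality it is increasing on `t > -1/2`,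
and it tends to `0`, so it is nonpositive. Telescoping gives `R x ≤ R (x+n)` and
`R (x+n) - R n ≤ R x - R 0`. Finally `R n → log √(2π)` is Stirling's formula, and
`R (x+n) - R n → 0` follows from the Bohr–Mollerup limit `log Γ(x+n+1) - log n! - x log n → 0`.
-/

open Real Filter Topology
open scoped Nat

theorem two_mul_sub_div_add_le_log_sub_log {a b : ℝ} (ha : 0 < a) (hab : a ≤ b) :
    2 * (b - a) / (b + a) ≤ log b - log a := by
  set u := (b - a) / (b + a) with hu
  have hu0 : 0 ≤ u := div_nonneg (by linarith) (by linarith)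
  have hu1 : |u| < 1 := by
    rw [abs_of_nonneg hu0, div_lt_one (by linarith)]; linarith
  have hlog : log (1 + u) - log (1 - u) = log b - log a := by
    rw [← log_div (by positivity) (by linarith [abs_lt.1 hu1]),
      ← log_div (by linarith) ha.ne']
    have hab' : b + a ≠ 0 := by linarith
    rw [show 1 + u = 2 * b / (b + a) by rw [hu]; field_simp; ring,
      show 1 - u = 2 * a / (b + a) by rw [hu]; field_simp; ring]
    field_simp
  rw [← hlog, mul_div_assoc]
  simpa using le_hasSum (hasSum_log_sub_log_of_abs_lt_one hu1) 0
    (fun k _ => by positivity)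

theorem tendsto_log_add_div_add_atTop (a b : ℝ) :
    Tendsto (fun t : ℝ => log ((t + b) / (t + a))) atTop (𝓝 0) := by
  have h : Tendsto (fun t : ℝ => (t + b) / (t + a)) atTop (𝓝 1) := by
    have := (tendsto_const_nhds (x := (1 : ℝ))).add
      ((tendsto_const_nhds (x := b - a)).div_atTop (tendsto_atTop_add_const_right _ a tendsto_id))
    rw [add_zero] at this
    refine this.congr' ?_
    filter_upwards [eventually_gt_atTop (-a)] with t ht
    have : t + a ≠ 0 := by linarith
    simp only [id]
    field_simp; ring
  have := (continuousAt_log one_ne_zero).tendsto.comp h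
  rwa [log_one] at this

theorem tendsto_add_mul_log_add_div_add_atTop (a b c : ℝ) :
    Tendsto (fun t : ℝ => (t + c) * log ((t + b) / (t + a))) atTop (𝓝 (b - a)) := by
  have hmain : Tendsto (fun t : ℝ => (t + a) * log ((t + b) / (t + a))) atTop (𝓝 (b - a)) := by
    refine ((tendsto_mul_log_one_add_div_atTop (b - a)).comp
      (tendsto_atTop_add_const_right _ a tendsto_id)).congr' ?_
    filter_upwards [eventually_gt_atTop (-a)] with t ht
    have : t + a ≠ 0 := by linarith
    simp only [Function.comp_apply, id]
    congr 2
    field_simp; ring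
  simpa using hmain.add ((tendsto_log_add_div_add_atTop a b).const_mul (c - a)) |>.congr
    fun t => by ring

noncomputable def stirlingRemainder (x : ℝ) : ℝ :=
  log (Gamma (x + 1)) - (x + 1 / 2) * log (x + 1 / 2) + (x + 1 / 2)

noncomputable def stirlingRemainderDiff (t : ℝ) : ℝ :=
  (t + 3 / 2) * log (t + 3 / 2) - (t + 1 / 2) * log (t + 1 / 2) - log (t + 1) - 1

theorem stirlingRemainder_sub_stirlingRemainder_add_one {t : ℝ} (ht : -1 < t) :
    stirlingRemainder t - stirlingRemainder (t + 1) = stirlingRemainderDiff t := by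
  have ht1 : t + 1 ≠ 0 := by linarith
  rw [stirlingRemainder, stirlingRemainder, stirlingRemainderDiff, Gamma_add_one ht1,
    log_mul ht1 (Gamma_pos_of_pos (by linarith)).ne']
  ring_nf

theorem stirlingRemainder_sub_stirlingRemainder_add_nat {x : ℝ} (hx : -1 < x) (n : ℕ) :
    stirlingRemainder x - stirlingRemainder (x + n) =
      ∑ k ∈ Finset.range n, stirlingRemainderDiff (x + k) := by
  calc stirlingRemainder x - stirlingRemainder (x + n)
      = ∑ k ∈ Finset.range n,
          (stirlingRemainder (x + k) - stirlingRemainder (x + (k + 1 : ℕ))) := by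
        rw [Finset.sum_range_sub' (fun k : ℕ => stirlingRemainder (x + k)), Nat.cast_zero, add_zero]
    _ = ∑ k ∈ Finset.range n, stirlingRemainderDiff (x + k) := by
        refine Finset.sum_congr rfl fun k _ => ?_
        rw [Nat.cast_succ, ← add_assoc]
        exact stirlingRemainder_sub_stirlingRemainder_add_one
          (by linarith [k.cast_nonneg (α := ℝ)])

theorem hasDerivAt_stirlingRemainderDiff {t : ℝ} (ht : -1 / 2 < t) :
    HasDerivAt stirlingRemainderDiff (log (t + 3 / 2) - log (t + 1 / 2) - 1 / (t + 1)) t := by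
  have h₁ := (hasDerivAt_mul_log (x := t + 3 / 2) (by linarith)).comp_add_const t (3 / 2)
  have h₂ := (hasDerivAt_mul_log (x := t + 1 / 2) (by linarith)).comp_add_const t (1 / 2)
  have h₃ : HasDerivAt (fun s => log (s + 1)) (1 / (t + 1)) t := by
    simpa using ((hasDerivAt_id t).add_const 1).log (by simp only [id]; linarith)
  exact (((h₁.sub h₂).sub h₃).sub_const 1).congr_deriv (by ring)

theorem monotoneOn_stirlingRemainderDiff :
    MonotoneOn stirlingRemainderDiff (Set.Ioi (-1 / 2)) := by
  refine monotoneOn_of_hasDerivWithinAt_nonneg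
    (f' := fun t => log (t + 3 / 2) - log (t + 1 / 2) - 1 / (t + 1)) (convex_Ioi _)
    (fun t ht => (hasDerivAt_stirlingRemainderDiff ht).continuousAt.continuousWithinAt)
    (fun t ht => ?_) (fun t ht => ?_)
  · rw [interior_Ioi] at ht
    exact (hasDerivAt_stirlingRemainderDiff ht).hasDerivWithinAt
  · rw [interior_Ioi] at ht
    have ht : -1 / 2 < t := ht
    have ht1 : t + 1 ≠ 0 := by linarith
    have key := two_mul_sub_div_add_le_log_sub_log (a := t + 1 / 2) (b := t + 3 / 2)
      (by linarith) (by linarith)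
    rw [show 2 * (t + 3 / 2 - (t + 1 / 2)) / (t + 3 / 2 + (t + 1 / 2)) = 1 / (t + 1) by
      rw [div_eq_div_iff (by linarith) ht1]; ring] at key
    linarith

theorem tendsto_stirlingRemainderDiff_atTop :
    Tendsto stirlingRemainderDiff atTop (𝓝 0) := by
  have h := (tendsto_add_mul_log_add_div_add_atTop (1 / 2) (3 / 2) (1 / 2)).add
    (tendsto_log_add_div_add_atTop 1 (3 / 2))
  rw [show (3 / 2 - 1 / 2 + 0 : ℝ) = 1 by norm_num] at h
  rw [← sub_self 1]
  refine (h.sub_const 1).congr' ?_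
  filter_upwards [eventually_gt_atTop 0] with t ht
  rw [log_div (by positivity) (by positivity), log_div (by positivity) (by positivity),
    stirlingRemainderDiff]
  ring

theorem stirlingRemainderDiff_nonpos {t : ℝ} (ht : -1 / 2 < t) : stirlingRemainderDiff t ≤ 0 :=
  ge_of_tendsto tendsto_stirlingRemainderDiff_atTop <| by
    filter_upwards [eventually_ge_atTop t] with s hs
    exact monotoneOn_stirlingRemainderDiff ht (ht.trans_le hs) hs

theorem tendsto_stirlingRemainder_natCast :
    Tendsto (fun n : ℕ => stirlingRemainder n) atTop (𝓝 (log √(2 * π))) := by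
  have hS := (continuousAt_log (by positivity)).tendsto.comp Stirling.tendsto_stirlingSeq_sqrt_pi
  have hL := (tendsto_add_mul_log_add_div_add_atTop 0 (1 / 2) (1 / 2)).comp
    tendsto_natCast_atTop_atTop
  have hlim : log √π + (1 / 2 * log 2 + 1 / 2) - (1 / 2 - 0) = log √(2 * π) := by
    rw [sqrt_mul zero_le_two, log_mul (by positivity) (by positivity), log_sqrt zero_le_two]
    ring
  rw [← hlim]
  refine ((hS.add_const _).sub hL).congr' ?_
  filter_upwards [eventually_gt_atTop 0] with n hn
  have hn : (0 : ℝ) < n := Nat.cast_pos.2 hn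
  simp only [Function.comp_apply, add_zero]
  rw [Stirling.log_stirlingSeq_formula, stirlingRemainder, Gamma_nat_eq_factorial,
    log_div (by positivity) hn.ne', log_mul two_ne_zero hn.ne', log_div hn.ne' (exp_ne_zero 1),
    log_exp]
  ring

theorem tendsto_log_Gamma_add_natCast_sub {x : ℝ} (hx : 0 < x) :
    Tendsto (fun n : ℕ => log (Gamma (x + n + 1)) - log (n ! : ℝ) - x * log n) atTop (𝓝 0) := by
  have hfeq : ∀ {y : ℝ}, 0 < y → (log ∘ Gamma) (y + 1) = (log ∘ Gamma) y + log y := fun hy => by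
    simp only [Function.comp_apply]
    rw [Gamma_add_one hy.ne', log_mul hy.ne' (Gamma_pos_of_pos hy).ne', add_comm]
  rw [← sub_self (log (Gamma x))]
  refine (tendsto_const_nhds.sub (BohrMollerup.tendsto_log_gamma hx)).congr fun n => ?_
  have := BohrMollerup.f_add_nat_eq hfeq hx (n + 1)
  simp only [Function.comp_apply, Nat.cast_succ, ← add_assoc] at this
  rw [BohrMollerup.logGammaSeq, this]
  ring

theorem tendsto_stirlingRemainder_add_natCast_sub {x : ℝ} (hx : 0 < x) :
    Tendsto (fun n : ℕ => stirlingRemainder (x + n) - stirlingRemainder n) atTop (𝓝 0) := by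
  have hG := tendsto_log_Gamma_add_natCast_sub hx
  have hA := (tendsto_add_mul_log_add_div_add_atTop (1 / 2) (x + 1 / 2) (1 / 2)).comp
    tendsto_natCast_atTop_atTop
  have hB := ((tendsto_log_add_div_add_atTop 0 (x + 1 / 2)).comp
    tendsto_natCast_atTop_atTop).const_mul x
  have := ((hG.sub hA).sub hB).add_const x
  simp only [mul_zero, sub_zero, add_sub_cancel_right, zero_sub, neg_add_cancel] at this
  refine this.congr' ?_
  filter_upwards [eventually_gt_atTop 0] with n hn
  have hn : (0 : ℝ) < n := Nat.cast_pos.2 hn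
  simp only [Function.comp_apply, add_zero]
  rw [stirlingRemainder, stirlingRemainder, Gamma_nat_eq_factorial,
    log_div (by positivity) (by positivity), log_div (by positivity) hn.ne',
    show (n : ℝ) + (x + 1 / 2) = x + n + 1 / 2 by ring]
  ring

theorem stirlingRemainder_le_log_sqrt_two_mul_pi {x : ℝ} (hx : 0 < x) :
    stirlingRemainder x ≤ log √(2 * π) := by
  have hlim := (tendsto_stirlingRemainder_add_natCast_sub hx).add tendsto_stirlingRemainder_natCast
  rw [zero_add] at hlim
  refine ge_of_tendsto hlim (Eventually.of_forall fun n => ?_)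
  have hsum := stirlingRemainder_sub_stirlingRemainder_add_nat (by linarith) n (x := x)
  have hnonpos : ∑ k ∈ Finset.range n, stirlingRemainderDiff (x + k) ≤ 0 :=
    Finset.sum_nonpos fun k _ => stirlingRemainderDiff_nonpos
      (by linarith [k.cast_nonneg (α := ℝ)])
  simp only [sub_add_cancel]
  linarith

theorem stirlingRemainder_zero_le {x : ℝ} (hx : 0 < x) :
    stirlingRemainder 0 ≤ stirlingRemainder x := by
  refine sub_nonneg.1 (le_of_tendsto' (tendsto_stirlingRemainder_add_natCast_sub hx) fun n => ?_)
  have hsum := stirlingRemainder_sub_stirlingRemainder_add_nat (by linarith) n (x := x)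
  have hsum₀ := stirlingRemainder_sub_stirlingRemainder_add_nat (by norm_num) n (x := 0)
  have hmono : ∑ k ∈ Finset.range n, stirlingRemainderDiff (0 + k) ≤
      ∑ k ∈ Finset.range n, stirlingRemainderDiff (x + k) :=
    Finset.sum_le_sum fun k _ => by
      have hk : (0 : ℝ) ≤ k := k.cast_nonneg
      exact monotoneOn_stirlingRemainderDiff (by simp only [Set.mem_Ioi]; linarith)
        (by simp only [Set.mem_Ioi]; linarith) (by linarith)
  rw [zero_add] at hsum₀
  linarith

theorem stirlingRemainder_zero : stirlingRemainder 0 = log √(2 * exp 1) := by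
  simp only [stirlingRemainder, zero_add, Gamma_one, log_one]
  rw [log_sqrt (by positivity), log_mul two_ne_zero (exp_ne_zero 1), log_exp, one_div, log_inv]
  ring

theorem Gamma_add_one_eq_exp_stirlingRemainder_mul {x : ℝ} (hx : -1 / 2 < x) :
    Gamma (x + 1) = exp (stirlingRemainder x) * ((x + 1 / 2) / exp 1) ^ (x + 1 / 2) := by
  rw [← exp_log (Gamma_pos_of_pos (by linarith : 0 < x + 1)),
    rpow_def_of_pos (div_pos (by linarith) (exp_pos 1)), ← exp_add,
    log_div (by linarith) (exp_ne_zero 1), log_exp, stirlingRemainder]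
  congr 1
  ring

theorem gamma_bounds (x : ℝ) (hx : 0 < x) :
    Real.sqrt (2 * Real.exp 1) * ((x + 1/2) / Real.exp 1) ^ (x + 1/2) ≤ Real.Gamma (x + 1) ∧
    Real.Gamma (x + 1) ≤ Real.sqrt (2 * Real.pi) * ((x + 1/2) / Real.exp 1) ^ (x + 1/2) := by
  rw [Gamma_add_one_eq_exp_stirlingRemainder_mul (by linarith)]
  constructor
  · gcongr
    rw [← exp_log (by positivity : 0 < √(2 * exp 1)), exp_le_exp, ← stirlingRemainder_zero]
    exact stirlingRemainder_zero_le hx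
  · gcongr
    rw [← exp_log (by positivity : 0 < √(2 * π)), exp_le_exp]
    exact stirlingRemainder_le_log_sqrt_two_mul_pi hx
end

section
/- For 0 < q < 1 and x ∈ [0,1], we have ∫_x^1 dt/√((1-t²)(1-qt²)) ≤ (2/(1-q))·√(1-x²)/√(1-qx²). -/
open Real MeasureTheory intervalIntegral

theorem incomplete_elliptic_K_bound (q : ℝ) (hq0 : 0 < q) (hq1 : q < 1)
    (x : ℝ) (hx : x ∈ Set.Icc (0 : ℝ) 1) :
    (∫ t in x..1, 1 / Real.sqrt ((1 - t ^ 2) * (1 - q * t ^ 2))) ≤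
      (2 / (1 - q)) * Real.sqrt (1 - x ^ 2) / Real.sqrt (1 - q * x ^ 2) := by
  obtain ⟨hx0, hx1⟩ := hx
  have hq0' : (0:ℝ) < 1 - q := by linarith
  set c : ℝ := 1 / (Real.sqrt (1 - q) * Real.sqrt (1 + x)) with hc
  have hcpos : 0 < c := by
    apply one_div_pos.mpr
    apply mul_pos (Real.sqrt_pos.mpr hq0') (Real.sqrt_pos.mpr (by linarith))
  -- dominating function
  set g : ℝ → ℝ := fun t => c * (1 - t) ^ (-(1/2) : ℝ) with hg
  -- integrability of g
  have hgint : IntervalIntegrable g volume x 1 := by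
    have h1 : IntervalIntegrable (fun u : ℝ => u ^ (-(1/2) : ℝ)) volume 0 (1 - x) :=
      intervalIntegral.intervalIntegrable_rpow' (by norm_num)
    have h2 := (h1.comp_sub_left 1).symm
    simp only [sub_zero, sub_sub_cancel] at h2
    exact h2.const_mul c
  -- pointwise bound on Ioc x 1
  have hbound : ∀ t ∈ Set.Ioc x 1,
      1 / Real.sqrt ((1 - t ^ 2) * (1 - q * t ^ 2)) ≤ g t := by
    intro t ht
    obtain ⟨htx, ht1⟩ := ht
    have ht0 : 0 ≤ t := le_trans hx0 htx.le
    have h1t : 0 ≤ 1 - t := by linarith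
    have hrpow : (1 - t) ^ (-(1/2) : ℝ) = 1 / Real.sqrt (1 - t) := by
      rw [Real.rpow_neg h1t, Real.sqrt_eq_rpow]; norm_num
    rw [hg]
    simp only [hrpow]
    rcases eq_or_lt_of_le ht1 with h | h
    · subst h
      simp
    · have h1t' : 0 < 1 - t := by linarith
      have hqt : 0 < 1 - q * t ^ 2 := by nlinarith
      have key : Real.sqrt (1 - q) * Real.sqrt (1 + x) * Real.sqrt (1 - t) ≤
          Real.sqrt ((1 - t ^ 2) * (1 - q * t ^ 2)) := by
        rw [← Real.sqrt_mul hq0'.le, ← Real.sqrt_mul (by positivity)]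
        apply Real.sqrt_le_sqrt
        have ht2 : t ^ 2 ≤ 1 := by nlinarith
        have hA : (1 - q) * (1 + x) ≤ (1 - q * t ^ 2) * (1 + t) :=
          mul_le_mul (by nlinarith) (by linarith) (by linarith) (by nlinarith)
        nlinarith [mul_le_mul_of_nonneg_right hA h1t]
      have hpos : 0 < Real.sqrt (1 - q) * Real.sqrt (1 + x) * Real.sqrt (1 - t) := by
        positivity
      have := one_div_le_one_div_of_le hpos key
      calc 1 / Real.sqrt ((1 - t ^ 2) * (1 - q * t ^ 2))
          ≤ 1 / (Real.sqrt (1 - q) * Real.sqrt (1 + x) * Real.sqrt (1 - t)) := this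
        _ = c * (1 / Real.sqrt (1 - t)) := by rw [hc]; field_simp
  -- compare integrals
  have hmono : (∫ t in x..1, 1 / Real.sqrt ((1 - t ^ 2) * (1 - q * t ^ 2))) ≤
      ∫ t in x..1, g t := by
    rw [intervalIntegral.integral_of_le hx1, intervalIntegral.integral_of_le hx1]
    apply MeasureTheory.integral_mono_of_nonneg
    · exact Filter.Eventually.of_forall fun t => by positivity
    · exact (intervalIntegrable_iff_integrableOn_Ioc_of_le hx1).mp hgint
    · exact (ae_restrict_iff' measurableSet_Ioc).mpr (Filter.Eventually.of_forall hbound)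
  -- compute ∫ g
  have hcalc : (∫ t in x..1, g t) = c * (2 * Real.sqrt (1 - x)) := by
    rw [hg]
    rw [intervalIntegral.integral_const_mul]
    have : (∫ t in x..1, (1 - t) ^ (-(1/2) : ℝ)) =
        ∫ u in (0:ℝ)..(1 - x), u ^ (-(1/2) : ℝ) := by
      rw [show (0:ℝ) = 1 - 1 by ring]
      exact (intervalIntegral.integral_comp_sub_left (fun u : ℝ => u ^ (-(1/2) : ℝ)) 1)
    rw [this, integral_rpow (Or.inl (by norm_num))]
    rw [show (-(1/2) : ℝ) + 1 = 1/2 by norm_num]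
    rw [Real.zero_rpow (by norm_num), ← Real.sqrt_eq_rpow]
    ring
  rw [hcalc] at hmono
  refine le_trans hmono ?_
  -- final algebra
  have sa := Real.sqrt_nonneg (1 - q)
  have sapos : 0 < Real.sqrt (1 - q) := Real.sqrt_pos.mpr hq0'
  have sbpos : 0 < Real.sqrt (1 + x) := Real.sqrt_pos.mpr (by linarith)
  have hx2 : x ^ 2 ≤ 1 := by nlinarith [mul_nonneg (by linarith : (0:ℝ) ≤ 1 - x) (by linarith : (0:ℝ) ≤ 1 + x)]
  have hqx : 0 < 1 - q * x ^ 2 := by nlinarith [mul_le_of_le_one_right hq0.le hx2]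
  have sdpos : 0 < Real.sqrt (1 - q * x ^ 2) := Real.sqrt_pos.mpr hqx
  have scnn : 0 ≤ Real.sqrt (1 - x) := Real.sqrt_nonneg _
  have hsplit : Real.sqrt (1 - x ^ 2) = Real.sqrt (1 - x) * Real.sqrt (1 + x) := by
    rw [← Real.sqrt_mul (by linarith)]; ring_nf
  have key : Real.sqrt (1 - q) * Real.sqrt (1 - q * x ^ 2) ≤ 1 + x := by
    have h1 : Real.sqrt (1 - q) ≤ Real.sqrt (1 - q * x ^ 2) :=
      Real.sqrt_le_sqrt (by nlinarith [mul_le_of_le_one_right hq0.le hx2])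
    have h2 : Real.sqrt (1 - q * x ^ 2) * Real.sqrt (1 - q * x ^ 2) = 1 - q * x ^ 2 :=
      Real.mul_self_sqrt hqx.le
    nlinarith
  have hsa2 : Real.sqrt (1 - q) * Real.sqrt (1 - q) = 1 - q := Real.mul_self_sqrt hq0'.le
  have hsb2 : Real.sqrt (1 + x) * Real.sqrt (1 + x) = 1 + x :=
    Real.mul_self_sqrt (by linarith)
  rw [hsplit, hc]
  rw [div_mul_eq_mul_div, div_le_div_iff₀ (by positivity) (by positivity),
    div_mul_eq_mul_div, div_mul_eq_mul_div, le_div_iff₀ hq0']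
  nlinarith [mul_le_mul_of_nonneg_left key (mul_nonneg scnn sapos.le),
    mul_le_mul_of_nonneg_left hsa2.le (mul_nonneg scnn sdpos.le),
    mul_le_mul_of_nonneg_left hsa2.ge (mul_nonneg scnn sdpos.le),
    mul_le_mul_of_nonneg_left hsb2.le (mul_nonneg scnn sapos.le),
    mul_le_mul_of_nonneg_left hsb2.ge (mul_nonneg scnn sapos.le)]
end

section
/- Let (λ_k) be a sequence in [0,1] with T = Σ λ_k < ∞ and N = Σ λ_k² < ∞. For 0 < δ < 1, the number M(δ) of indices with λ_k ≥ δ satisfies M(δ) ≥ T − (T − N)/(1 − δ). -/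
/-!
Pointwise, `x ≤ 𝟙[δ ≤ x] + (x - x²) / (1 - δ)` for `x ∈ [0, 1]`: if `x < δ` then
`x² ≤ δ x`, i.e. `(1 - δ) x ≤ x - x²`. Summing over `k` gives `T ≤ M(δ) + (T - N) / (1 - δ)`,
and `M(δ)` is finite because a summable sequence exceeds `δ > 0` only finitely often.
-/

theorem Summable.finite_setOf_le {ι : Type*} {f : ι → ℝ} (hf : Summable f) {δ : ℝ}
    (hδ : 0 < δ) : {i | δ ≤ f i}.Finite := by
  simpa only [not_lt] using
    Filter.eventually_cofinite.mp (hf.tendsto_cofinite_zero.eventually_lt_const hδ)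

theorem tsum_indicator_one_eq_natCard {ι : Type*} (s : Set ι) :
    ∑' i, s.indicator (1 : ι → ℝ) i = Nat.card s := by
  rw [← tsum_subtype]
  exact (tsum_const (1 : ℝ)).trans (nsmul_one _)

theorem le_ite_add_sub_sq_div {x δ : ℝ} (hx0 : 0 ≤ x) (hx1 : x ≤ 1) (hδ1 : δ < 1) :
    x ≤ (if δ ≤ x then 1 else 0) + (x - x ^ 2) / (1 - δ) := by
  have hgap : 0 ≤ x - x ^ 2 := by nlinarith
  split_ifs with hδx
  · linarith [div_nonneg hgap (sub_pos.mpr hδ1).le]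
  · rw [zero_add, le_div_iff₀ (sub_pos.mpr hδ1)]
    nlinarith

theorem counting_lower_bound (lam : ℕ → ℝ) (h0 : ∀ k, 0 ≤ lam k) (h1 : ∀ k, lam k ≤ 1)
    (hsum : Summable lam) (hsum2 : Summable fun k => (lam k) ^ 2)
    (δ : ℝ) (hδ0 : 0 < δ) (hδ1 : δ < 1) :
    (∑' k, lam k) - ((∑' k, lam k) - ∑' k, (lam k) ^ 2) / (1 - δ) ≤
      (Nat.card {k : ℕ | δ ≤ lam k} : ℝ) := by
  set S := {k : ℕ | δ ≤ lam k}
  have hS : Summable (S.indicator (1 : ℕ → ℝ)) :=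
    summable_of_hasFiniteSupport ((hsum.finite_setOf_le hδ0).subset Set.support_indicator_subset)
  have hgap : Summable fun k => lam k - lam k ^ 2 := hsum.sub hsum2
  have hbound : ∑' k, lam k ≤ ∑' k, (S.indicator 1 k + (lam k - lam k ^ 2) / (1 - δ)) :=
    hsum.tsum_le_tsum (fun k => by
      simpa only [Set.indicator_apply, S, Set.mem_ofPred_eq, Pi.one_apply]
        using le_ite_add_sub_sq_div (h0 k) (h1 k) hδ1)
      (hS.add (hgap.div_const _))
  rw [hS.tsum_add (hgap.div_const _), tsum_indicator_one_eq_natCard, tsum_div_const,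
    hsum.tsum_sub hsum2] at hbound
  linarith
end

section
/- For 0 < q < 1 and x ∈ [0,1], one has (q x √(1-x²))/√(1-qx²) + S(x) ≤ 2·√(1-x²)/√(1-qx²), where S(x) = ∫_x^1 √((1-qt²)/(1-t²)) dt. -/
/-!
On `[0, 1)` the integrand satisfies `(1 - q t²) / (1 - t²) ≤ 1 / (1 - t)`, so `S(x) ≤ 2 √(1 - x)`.
It remains to see that `2 √(1 - x) ≤ (2 - q x) √(1 - x²) / √(1 - q x²)`; after squaring and
cancelling `1 - x` this is `4 (1 - q x²) ≤ (2 - q x)² (1 + x)`, whose difference of sides is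
`4 x (1 - q) + q² x² (1 + x) ≥ 0`.
-/

open Real

lemma intervalIntegrable_one_sub_rpow_neg_half (x : ℝ) :
    IntervalIntegrable (fun t : ℝ => (1 - t) ^ (-(1 / 2) : ℝ)) MeasureTheory.volume x 1 := by
  have h := (intervalIntegral.intervalIntegrable_rpow' (a := 1 - x) (b := 1 - 1)
    (r := -(1 / 2)) (by norm_num)).comp_sub_left 1
  simpa only [sub_sub_cancel] using h

lemma integral_one_sub_rpow_neg_half (x : ℝ) :
    ∫ t in x..1, (1 - t) ^ (-(1 / 2) : ℝ) = 2 * √(1 - x) := by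
  rw [intervalIntegral.integral_comp_sub_left (fun s : ℝ => s ^ (-(1 / 2) : ℝ)) 1,
    integral_rpow (Or.inl (by norm_num)), sqrt_eq_rpow]
  norm_num [zero_rpow]
  ring

lemma sqrt_div_one_sub_sq_le_one_sub_rpow {q t : ℝ} (hq : -1 ≤ q) (ht0 : 0 ≤ t) (ht1 : t ≤ 1) :
    √((1 - q * t ^ 2) / (1 - t ^ 2)) ≤ (1 - t) ^ (-(1 / 2) : ℝ) := by
  rcases ht1.eq_or_lt with rfl | ht1
  · norm_num
  have h1t : 0 < 1 - t := by linarith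
  have h1t2 : 0 < 1 - t ^ 2 := by nlinarith
  calc √((1 - q * t ^ 2) / (1 - t ^ 2)) ≤ √(1 / (1 - t)) := by
        refine sqrt_le_sqrt ?_
        rw [div_le_div_iff₀ h1t2 h1t]
        have hqt : 0 ≤ 1 + q * t := by nlinarith
        nlinarith [mul_nonneg (mul_nonneg h1t.le ht0) hqt]
    _ = (1 - t) ^ (-(1 / 2) : ℝ) := by
        rw [sqrt_eq_rpow, one_div, inv_rpow h1t.le, ← rpow_neg h1t.le]

lemma integral_sqrt_div_one_sub_sq_le {q x : ℝ} (hq : -1 ≤ q) (hx0 : 0 ≤ x) (hx1 : x ≤ 1) :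
    ∫ t in x..1, √((1 - q * t ^ 2) / (1 - t ^ 2)) ≤ 2 * √(1 - x) := by
  have hbound : ∀ t ∈ Set.Icc x 1,
      √((1 - q * t ^ 2) / (1 - t ^ 2)) ≤ (1 - t) ^ (-(1 / 2) : ℝ) :=
    fun t ht => sqrt_div_one_sub_sq_le_one_sub_rpow hq (hx0.trans ht.1) ht.2
  have hint : IntervalIntegrable (fun t => √((1 - q * t ^ 2) / (1 - t ^ 2)))
      MeasureTheory.volume x 1 := by
    refine (intervalIntegrable_one_sub_rpow_neg_half x).mono_fun'
      (by fun_prop : Measurable _).aestronglyMeasurable ?_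
    filter_upwards [MeasureTheory.ae_restrict_mem measurableSet_uIoc] with t ht
    rw [Set.uIoc_of_le hx1] at ht
    rw [norm_of_nonneg (sqrt_nonneg _)]
    exact hbound t ⟨ht.1.le, ht.2⟩
  rw [← integral_one_sub_rpow_neg_half x]
  exact intervalIntegral.integral_mono_on hx1 hint
    (intervalIntegrable_one_sub_rpow_neg_half x) hbound

lemma two_mul_sqrt_one_sub_le {q x : ℝ} (hq : q < 1) (hx0 : 0 ≤ x) (hx1 : x ≤ 1) :
    2 * √(1 - x) ≤ (2 - q * x) * √(1 - x ^ 2) / √(1 - q * x ^ 2) := by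
  have hqx : q * x ≤ 1 := by nlinarith [mul_nonneg (sub_nonneg.2 hq.le) hx0]
  have hB : 0 < 1 - q * x ^ 2 := by
    nlinarith [mul_nonneg (sub_nonneg.2 hq.le) (sq_nonneg x), mul_nonneg hx0 (sub_nonneg.2 hx1)]
  rw [le_div_iff₀ (sqrt_pos.2 hB)]
  refine le_of_pow_le_pow_left₀ two_ne_zero
    (mul_nonneg (by linarith) (sqrt_nonneg _)) ?_
  have hA : 0 ≤ 1 - x ^ 2 := by nlinarith
  rw [mul_pow, mul_pow, mul_pow, sq_sqrt hA, sq_sqrt hB.le, sq_sqrt (sub_nonneg.2 hx1)]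
  have hdiff : 0 ≤ 4 * x * (1 - q) + q ^ 2 * x ^ 2 * (1 + x) := by positivity
  nlinarith [mul_nonneg hdiff (sub_nonneg.2 hx1)]

theorem S_sum_bound (q : ℝ) (hq0 : 0 < q) (hq1 : q < 1)
    (x : ℝ) (hx : x ∈ Set.Icc (0 : ℝ) 1) :
    q * x * Real.sqrt (1 - x ^ 2) / Real.sqrt (1 - q * x ^ 2) +
      (∫ t in x..1, Real.sqrt ((1 - q * t ^ 2) / (1 - t ^ 2))) ≤
    2 * Real.sqrt (1 - x ^ 2) / Real.sqrt (1 - q * x ^ 2) := by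
  obtain ⟨hx0, hx1⟩ := hx
  have hS := (integral_sqrt_div_one_sub_sq_le (q := q) (by linarith) hx0 hx1).trans
    (two_mul_sqrt_one_sub_le hq1 hx0 hx1)
  calc q * x * √(1 - x ^ 2) / √(1 - q * x ^ 2) + ∫ t in x..1, √((1 - q * t ^ 2) / (1 - t ^ 2))
      ≤ q * x * √(1 - x ^ 2) / √(1 - q * x ^ 2)
          + (2 - q * x) * √(1 - x ^ 2) / √(1 - q * x ^ 2) := by gcongr
    _ = 2 * √(1 - x ^ 2) / √(1 - q * x ^ 2) := by rw [← add_div]; ring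
end
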